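/- For all real x with 0 < |x| < π/2, one has 3x/sin x + cos x < 4 + ((12π − 32)/π³)·x³·sin x. -/

import Mathlib

/-!
Multiplying by `sin x > 0` and using that both sides are even, it suffices to show that
`D x = 3x + sin x cos x - 4 sin x - κ x³ sin² x` is negative on `(0, π/2)`, where
`κ = (12π - 32)/π³` is exactly the constant with `D (π/2) = 0` (hence best possible).
On `(0, 3/2]` we bound `sin` and `cos` by their Taylor polynomials up to degree 7, obtained by
integrating `x - x³/6 ≤ sin x` repeatedly, and are left with a polynomial inequality.
On `[3/2, π/2]` the function `D` is strictly increasing, because `cos x ≤ π/2 - x` is small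
there, so `D x < D (π/2) = 0`.
-/

open Real

theorem le_of_deriv_le_of_le {f g : ℝ → ℝ} {a x : ℝ} (hf : Differentiable ℝ f)
    (hg : Differentiable ℝ g) (ha : f a ≤ g a) (h' : ∀ t, a < t → deriv f t ≤ deriv g t)
    (hx : a ≤ x) : f x ≤ g x := by
  have hmono : MonotoneOn (g - f) (Set.Ici a) :=
    monotoneOn_of_deriv_nonneg (convex_Ici a) (hg.sub hf).continuous.continuousOn
      (hg.sub hf).differentiableOn fun t ht ↦ by
        rw [interior_Ici] at ht
        rw [deriv_sub (hg t) (hf t)]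
        exact sub_nonneg.2 (h' t ht)
  linarith [show g a - f a ≤ g x - f x from hmono (Set.mem_Ici.2 le_rfl) hx hx]

namespace Real

variable {x : ℝ}

theorem cos_le_quartic (hx : 0 ≤ x) : cos x ≤ 1 - x ^ 2 / 2 + x ^ 4 / 24 :=
  le_of_deriv_le_of_le (f := cos) (g := fun t ↦ 1 - t ^ 2 / 2 + t ^ 4 / 24)
    (by fun_prop) (by fun_prop) (by simp) (fun t ht ↦ by
    simp (disch := fun_prop) only [deriv_cos', deriv_fun_add, deriv_fun_sub, deriv_const',
      deriv_div_const, deriv_fun_pow, deriv_id'', Nat.cast_ofNat, Nat.add_one_sub_one]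
    linarith [sin_ge_sub_cube ht.le]) hx

theorem sin_le_quintic (hx : 0 ≤ x) : sin x ≤ x - x ^ 3 / 6 + x ^ 5 / 120 :=
  le_of_deriv_le_of_le (f := sin) (g := fun t ↦ t - t ^ 3 / 6 + t ^ 5 / 120)
    (by fun_prop) (by fun_prop) (by simp) (fun t ht ↦ by
    simp (disch := fun_prop) only [deriv_sin, deriv_fun_add, deriv_fun_sub, deriv_div_const,
      deriv_fun_pow, deriv_id'', Nat.cast_ofNat, Nat.add_one_sub_one]
    linarith [cos_le_quartic ht.le]) hx

theorem sextic_le_cos (hx : 0 ≤ x) : 1 - x ^ 2 / 2 + x ^ 4 / 24 - x ^ 6 / 720 ≤ cos x :=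
  le_of_deriv_le_of_le (f := fun t ↦ 1 - t ^ 2 / 2 + t ^ 4 / 24 - t ^ 6 / 720) (g := cos)
    (by fun_prop) (by fun_prop) (by simp) (fun t ht ↦ by
    simp (disch := fun_prop) only [deriv_cos', deriv_fun_add, deriv_fun_sub, deriv_const',
      deriv_div_const, deriv_fun_pow, deriv_id'', Nat.cast_ofNat, Nat.add_one_sub_one]
    linarith [sin_le_quintic ht.le]) hx

theorem septic_le_sin (hx : 0 ≤ x) : x - x ^ 3 / 6 + x ^ 5 / 120 - x ^ 7 / 5040 ≤ sin x :=
  le_of_deriv_le_of_le (f := fun t ↦ t - t ^ 3 / 6 + t ^ 5 / 120 - t ^ 7 / 5040) (g := sin)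
    (by fun_prop) (by fun_prop) (by simp) (fun t ht ↦ by
    simp (disch := fun_prop) only [deriv_sin, deriv_fun_add, deriv_fun_sub, deriv_div_const,
      deriv_fun_pow, deriv_id'', Nat.cast_ofNat, Nat.add_one_sub_one]
    linarith [sextic_le_cos ht.le]) hx

end Real

local notation "κ" => (12 * π - 32) / π ^ 3

theorem kappa_ge : (0.1837 : ℝ) ≤ κ := by
  rw [le_div_iff₀ (by positivity)]
  nlinarith [pi_gt_d6, pi_lt_d6, sq_nonneg (π - 3.141593)]

theorem kappa_le : κ ≤ (0.18381 : ℝ) := by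
  rw [div_le_iff₀ (by positivity)]
  nlinarith [pi_gt_d6, pi_lt_d6, sq_nonneg (π - 3.141592)]

-- The Taylor majorant of `cusaDefect x` below, divided by `x⁵`, with `t = x²`.
theorem cusa_taylor_poly_lt {t : ℝ} (ht₀ : 0 ≤ t) (ht : t ≤ 9 / 4) :
    1 / 10 - 13 / 1260 * t + t ^ 2 / 2880 <
      0.1837 * (1 - t / 6 + t ^ 2 / 120 - t ^ 3 / 5040) ^ 2 := by
  nlinarith [mul_nonneg ht₀ (sub_nonneg.2 ht), pow_nonneg ht₀ 2, pow_nonneg ht₀ 3,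
    pow_nonneg ht₀ 4, pow_nonneg ht₀ 5, pow_nonneg ht₀ 6]

noncomputable def cusaDefect (x : ℝ) : ℝ :=
  3 * x + sin x * cos x - 4 * sin x - κ * x ^ 3 * sin x ^ 2

theorem cusaDefect_pi_div_two : cusaDefect (π / 2) = 0 := by
  rw [cusaDefect, sin_pi_div_two, cos_pi_div_two]
  field_simp
  ring

theorem hasDerivAt_cusaDefect (x : ℝ) :
    HasDerivAt cusaDefect
      (2 + 2 * cos x ^ 2 - 4 * cos x - κ * x ^ 2 * sin x * (3 * sin x + 2 * x * cos x)) x := by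
  refine HasDerivAt.congr_deriv ((((hasDerivAt_id x).const_mul 3).fun_add
    ((hasDerivAt_sin x).fun_mul (hasDerivAt_cos x))).fun_sub ((hasDerivAt_sin x).const_mul 4)
    |>.fun_sub (((hasDerivAt_pow 3 x).const_mul κ).fun_mul ((hasDerivAt_sin x).fun_pow 2))) ?_
  linear_combination (-1 : ℝ) * sin_sq_add_cos_sq x

theorem strictMonoOn_cusaDefect : StrictMonoOn cusaDefect (Set.Icc (3 / 2) (π / 2)) := by
  refine strictMonoOn_of_deriv_pos (convex_Icc _ _)
    (fun y _ ↦ (hasDerivAt_cusaDefect y).continuousAt.continuousWithinAt) fun y hy ↦ ?_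
  rw [interior_Icc] at hy
  obtain ⟨hy₁, hy₂⟩ := hy
  rw [(hasDerivAt_cusaDefect y).deriv]
  have hcos₀ : 0 ≤ cos y := cos_nonneg_of_mem_Icc ⟨by linarith [pi_pos], hy₂.le⟩
  have hcos : cos y ≤ π / 2 - y := by
    rw [← sin_pi_div_two_sub]
    exact sin_le (by linarith)
  have hsin₀ : 0 ≤ sin y := sin_nonneg_of_nonneg_of_le_pi (by linarith) (by linarith [pi_pos])
  have hsin := sin_le_one y
  have hy : y < 1.5708 := by linarith [pi_lt_d6]
  have hyc : 2 * y * cos y ≤ 0.2232 := by nlinarith [pi_lt_d6]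
  have hfactor : y ^ 2 * sin y * (3 * sin y + 2 * y * cos y) ≤ 1.5708 ^ 2 * 1 * 3.2232 := by
    gcongr
    linarith
  have hcos' : cos y ≤ 0.0708 := by linarith [pi_lt_d6]
  linarith [kappa_le, mul_le_mul_of_nonneg_left hfactor (by linarith [kappa_ge] : (0 : ℝ) ≤ κ),
    sq_nonneg (cos y)]

theorem cusaDefect_neg_of_le {x : ℝ} (hx₀ : 0 < x) (hx : x ≤ 3 / 2) : cusaDefect x < 0 := by
  have hS₀ : 0 ≤ x - x ^ 3 / 6 + x ^ 5 / 120 - x ^ 7 / 5040 := by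
    nlinarith [mul_nonneg (pow_nonneg hx₀.le 5) (by nlinarith : (0 : ℝ) ≤ 42 - x ^ 2)]
  have hsin_cos : sin x * cos x ≤ (x - x ^ 3 / 6 + x ^ 5 / 120) * (1 - x ^ 2 / 2 + x ^ 4 / 24) :=
    mul_le_mul (sin_le_quintic hx₀.le) (cos_le_quartic hx₀.le)
      (cos_nonneg_of_mem_Icc ⟨by linarith [pi_pos], by linarith [pi_gt_three]⟩)
      (by nlinarith [pow_nonneg hx₀.le 5])
  have hsin_sq : 0.1837 * x ^ 3 * (x - x ^ 3 / 6 + x ^ 5 / 120 - x ^ 7 / 5040) ^ 2 ≤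
      κ * x ^ 3 * sin x ^ 2 :=
    mul_le_mul (mul_le_mul_of_nonneg_right kappa_ge (by positivity))
      (pow_le_pow_left₀ hS₀ (septic_le_sin hx₀.le) 2) (by positivity)
      (mul_nonneg (by linarith [kappa_ge]) (by positivity))
  have hpoly := mul_lt_mul_of_pos_left (cusa_taylor_poly_lt (sq_nonneg x) (by nlinarith))
    (pow_pos hx₀ 5)
  rw [cusaDefect]
  linarith [septic_le_sin hx₀.le]

theorem cusaDefect_neg {x : ℝ} (hx₀ : 0 < x) (hx : x < π / 2) : cusaDefect x < 0 := by
  rcases le_or_gt x (3 / 2) with hx' | hx'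
  · exact cusaDefect_neg_of_le hx₀ hx'
  · rw [← cusaDefect_pi_div_two]
    exact strictMonoOn_cusaDefect ⟨hx'.le, hx.le⟩ ⟨by linarith, le_rfl⟩ hx

theorem cusa_huygens_upper (x : ℝ) (h1 : 0 < |x|) (h2 : |x| < π / 2) :
    3 * x / Real.sin x + Real.cos x < 4 + ((12 * π - 32) / π ^ 3) * x ^ 3 * Real.sin x := by
  wlog hx : 0 < x generalizing x
  · have := this (-x) (by rwa [abs_neg]) (by rwa [abs_neg])
      (neg_pos.2 ((not_lt.1 hx).lt_of_ne (abs_pos.1 h1)))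
    rw [sin_neg, cos_neg, mul_neg, neg_div_neg_eq] at this
    linarith [show κ * (-x) ^ 3 * -sin x = κ * x ^ 3 * sin x by ring]
  rw [abs_of_pos hx] at h2
  have hsin : 0 < sin x := sin_pos_of_pos_of_lt_pi hx (by linarith [pi_pos])
  have hdefect := cusaDefect_neg hx h2
  rw [cusaDefect] at hdefect
  rw [div_add' _ _ _ hsin.ne', div_lt_iff₀ hsin]
  linarith
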